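/- For every s ∈ ℂ, the formal series ((x+x_2)/(x+x_0))^s · (1 − s + s·(x+x_0)/(x+x_2)) · (x_0−x_2)^{−2} − (x_0−x_2)^{−2} lies in ℂ[[x_0, x_2, x^{-1}]]; that is, it contains only nonnegative integral powers of x_0 and of x_2. Here ((x+x_2)/(x+x_0))^s means (x+x_2)^s (x+x_0)^{−s} with (x+x_2)^s expanded in nonnegative integral powers of x_2 and (x+x_0)^{−s} in nonnegative integral powers of x_0, (x+x_0)/(x+x_2) means (x+x_0)(x+x_2)^{−1} similarly expanded, and (x_0−x_2)^{−2} is expanded in nonnegative integral powers of x_2. Consequently, for α, β ∈ h, m ∈ ℕ and n ∈ ℤ_+: Res_{x_0} Res_{x_2} x_0^{m} x_2^{−n} ∑_{r=1}^{p} ((x+x_2)/(x+x_0))^{r/p} (1 − r/p + (r/p)(x+x_0)/(x+x_2)) (x_0−x_2)^{−2} ⟨α_(r), β⟩ = m δ_{m,n} ⟨α, β⟩. -/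
import Mathlib


noncomputable section

open scoped BigOperators

/-- Generalized binomial coefficient `z(z-1)⋯(z-k+1)/k!`. -/
def cbinom (z : ℂ) (k : ℕ) : ℂ :=
  (∏ j ∈ Finset.range k, (z - (j : ℂ))) / (k.factorial : ℂ)

/-- Generalized binomial coefficient with integer lower index (zero for negative index). -/
def cbinomZ (z : ℂ) (k : ℤ) : ℂ := if 0 ≤ k then cbinom z k.toNat else 0

/-- The Heisenberg setting: a `d`-dimensional abelian Lie algebra `H` over `ℂ` (encoded
by an orthonormal spanning family `bas : Fin d → H`) with a nondegenerate symmetric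
bilinear form `bil`, an isometry `nu` of period `p`, a primitive `p`-th root of unity
`ωp`, and the eigenspace projections `proj r : H → H_(r)` onto the `ωₚ^r`-eigenspaces of
`nu` (so that `proj` is `p`-periodic, the projections sum to the identity, and `nu` acts
as `ωₚ^r` on the range of `proj r`). -/
structure HeisForm (p : ℕ) (H : Type) [AddCommGroup H] [Module ℂ H] where
  bil : H →ₗ[ℂ] H →ₗ[ℂ] ℂ
  bil_symm : ∀ α β : H, bil α β = bil β α
  bil_nondeg : ∀ α : H, (∀ β : H, bil α β = 0) → α = 0
  nu : H ≃ₗ[ℂ] H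
  isom : ∀ α β : H, bil (nu α) (nu β) = bil α β
  period : nu ^ p = 1
  ωp : ℂ
  prim : IsPrimitiveRoot ωp p
  proj : ℤ → H →ₗ[ℂ] H
  proj_per : ∀ r : ℤ, proj (r + p) = proj r
  proj_sum : ∀ α : H, ∑ r ∈ Finset.range p, proj (r : ℤ) α = α
  proj_eig : ∀ (r : ℤ) (α : H), nu (proj r α) = ωp ^ r • proj r α
  d : ℕ
  bas : Fin d → H
  bas_ortho : ∀ q q' : Fin d, bil (bas q) (bas q') = if q = q' then 1 else 0
  bas_span : Submodule.span ℂ (Set.range bas) = ⊤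

variable {H : Type} [AddCommGroup H] [Module ℂ H]

/-- The coefficient of `x₀^a x₂^b x^c` in the formal series
`((x+x₂)/(x+x₀))^s (1 - s + s (x+x₀)/(x+x₂)) (x₀-x₂)^{-2}`,
where `(x+x₂)^s` (resp. `(x+x₀)^{-s}`, etc.) is expanded in nonnegative integral powers
of `x₂` (resp. `x₀`), and `(x₀-x₂)^{-2}` in nonnegative integral powers of `x₂`. -/
def EEsum (s : ℂ) (a b : ℤ) : ℂ :=
  ∑ᶠ l : ℕ, ((l : ℂ) + 1) *
    ((1 - s) * cbinomZ s (b - l) * cbinomZ (-s) (a + 2 + l)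
      + s * cbinomZ (s - 1) (b - l) * cbinomZ (1 - s) (a + 2 + l))

/-- The coefficient of `x₀^a x₂^b x^c` in
`((x+x₂)/(x+x₀))^s (1 - s + s (x+x₀)/(x+x₂)) (x₀-x₂)^{-2}`. -/
def EE (s : ℂ) (a b c : ℤ) : ℂ := if c = -(a + b + 2) then EEsum s a b else 0

/-- The coefficient of `x₀^a x₂^b x^c` in the formal series
`∑_{r=1}^{p} ((x+x₂)/(x+x₀))^{r/p} (1 - r/p + (r/p)(x+x₀)/(x+x₂)) (x₀-x₂)^{-2} ⟨α_(r),β⟩`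
appearing in the definition of the `g`-function. -/
def gCoeff (p : ℕ) (Hs : HeisForm p H) (α β : H) (a b c : ℤ) : ℂ :=
  if c = -(a + b + 2) then
    ∑ r ∈ Finset.Icc 1 p, Hs.bil (Hs.proj (r : ℤ) α) β * EEsum ((r : ℂ) / (p : ℂ)) a b
  else 0

/-- `g(α,m,β,n,x) = Res_{x₀} Res_{x₂} x₀^{-m} x₂^{-n} ∑_{r=1}^{p} (⋯)`: the residues pick
the coefficients `a = m-1`, `b = n-1`, and the resulting series in `x` is the monomial
`gval ⋅ x^{-m-n}`. -/
def gval (p : ℕ) (Hs : HeisForm p H) (α : H) (m : ℤ) (β : H) (n : ℤ) : ℂ :=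
  gCoeff p Hs α β (m - 1) (n - 1) (-(m + n))

lemma cbinom_zero (z : ℂ) : cbinom z 0 = 1 := by simp [cbinom]

lemma cbinom_zero_left {n : ℕ} (hn : 0 < n) : cbinom 0 n = 0 := by
  unfold cbinom
  rw [Finset.prod_eq_zero (Finset.mem_range.mpr hn) (by simp)]
  simp

lemma descPoch_smeval (z : ℂ) (n : ℕ) :
    (descPochhammer ℤ n).smeval z = ∏ j ∈ Finset.range n, (z - (j : ℂ)) := by
  induction n with
  | zero => simp [descPochhammer, Polynomial.smeval_one]
  | succ n ih =>
    rw [descPochhammer_succ_right, Polynomial.smeval_mul, ih, Finset.prod_range_succ,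
      Polynomial.smeval_sub, Polynomial.smeval_X, Polynomial.smeval_natCast]
    simp

lemma cbinom_eq_choose (z : ℂ) (n : ℕ) : cbinom z n = Ring.choose z n := by
  have h := Ring.descPochhammer_eq_factorial_smul_choose z n
  rw [descPoch_smeval] at h
  rw [cbinom, h, nsmul_eq_mul]
  have : (n.factorial : ℂ) ≠ 0 := Nat.cast_ne_zero.mpr n.factorial_ne_zero
  field_simp

lemma cbinom_vandermonde (z w : ℂ) (n : ℕ) :
    ∑ j ∈ Finset.range (n+1), cbinom z j * cbinom w (n - j) = cbinom (z+w) n := by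
  rw [cbinom_eq_choose, Ring.add_choose_eq n (Commute.all z w),
    Finset.Nat.sum_antidiagonal_eq_sum_range_succ_mk]
  exact Finset.sum_congr rfl fun j hj => by rw [cbinom_eq_choose, cbinom_eq_choose]

lemma cbinomZ_natCast (z : ℂ) (n : ℕ) : cbinomZ z n = cbinom z n := by
  simp [cbinomZ]

lemma cbinomZ_neg {k : ℤ} (h : k < 0) (z : ℂ) : cbinomZ z k = 0 := by
  simp [cbinomZ, not_le.mpr h]

lemma cbinomZ_zero_left (k : ℤ) : cbinomZ 0 k = if k = 0 then 1 else 0 := by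
  rcases lt_trichotomy k 0 with h | h | h
  · rw [cbinomZ_neg h]; simp [h.ne]
  · subst h; simp [cbinomZ, cbinom_zero]
  · rw [cbinomZ, if_pos h.le, cbinom_zero_left (by omega), if_neg h.ne']

lemma absorb (w : ℂ) (m : ℤ) : (m : ℂ) * cbinomZ w m = w * cbinomZ (w-1) (m-1) := by
  rcases lt_trichotomy m 0 with h | h | h
  · rw [cbinomZ_neg h, cbinomZ_neg (by omega)]; ring
  · subst h
    norm_num [cbinomZ]
  · obtain ⟨t, rfl⟩ : ∃ t : ℕ, m = (t : ℤ) + 1 := ⟨(m-1).toNat, by omega⟩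
    rw [show ((t:ℤ)+1) = ((t+1 : ℕ) : ℤ) by push_cast; ring, cbinomZ_natCast,
      show ((t+1 : ℕ) : ℤ) - 1 = (t : ℤ) by push_cast; ring, cbinomZ_natCast]
    unfold cbinom
    rw [Finset.prod_range_succ', Nat.factorial_succ]
    have hp : ∏ x ∈ Finset.range t, (w - ((x+1 : ℕ):ℂ)) = ∏ x ∈ Finset.range t, ((w-1) - (x:ℂ)) :=
      Finset.prod_congr rfl (fun x _ => by push_cast; ring)
    rw [hp]
    have h2 : (t.factorial : ℂ) ≠ 0 := Nat.cast_ne_zero.mpr t.factorial_ne_zero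
    have h3 : ((t:ℂ) + 1) ≠ 0 := by
      have : ((t:ℂ) + 1) = ((t + 1 : ℕ) : ℂ) := by push_cast; ring
      rw [this]
      exact Nat.cast_ne_zero.mpr (Nat.succ_ne_zero t)
    push_cast
    field_simp
    ring

lemma convA (z w : ℂ) (b : ℕ) (k : ℤ) (hk : 0 ≤ k) :
    ∑ l ∈ Finset.range (b+1), cbinomZ z ((b:ℤ) - l) * cbinomZ w ((l:ℤ) - k)
      = cbinomZ (z+w) ((b:ℤ) - k) := by
  obtain ⟨k', rfl⟩ := Int.eq_ofNat_of_zero_le hk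
  by_cases hkb : k' ≤ b
  · have hsub : Finset.Ico k' (b+1) ⊆ Finset.range (b+1) := by
      intro l hl; simp only [Finset.mem_Ico] at hl; simp only [Finset.mem_range]; omega
    rw [← Finset.sum_subset hsub (fun l hl hnl => by
      have : (l:ℤ) - k' < 0 := by
        simp only [Finset.mem_range] at hl
        simp only [Finset.mem_Ico, not_and, not_le] at hnl
        omega
      rw [cbinomZ_neg this, mul_zero])]
    rw [Finset.sum_Ico_eq_sum_range]
    have hr : b + 1 - k' = (b - k') + 1 := by omega
    rw [hr]
    have key : ∀ j ∈ Finset.range (b - k' + 1),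
        cbinomZ z ((b:ℤ) - ((k' + j : ℕ):ℤ)) * cbinomZ w (((k' + j : ℕ):ℤ) - (k':ℤ))
          = cbinom w j * cbinom z (b - k' - j) := by
      intro j hj
      simp only [Finset.mem_range] at hj
      have e1 : ((b:ℤ) - ((k' + j : ℕ):ℤ)) = ((b - k' - j : ℕ) : ℤ) := by push_cast; omega
      have e2 : (((k' + j : ℕ):ℤ) - (k':ℤ)) = ((j : ℕ) : ℤ) := by push_cast; omega
      rw [e1, e2, cbinomZ_natCast, cbinomZ_natCast, mul_comm]
    rw [Finset.sum_congr rfl key]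
    rw [cbinom_vandermonde w z (b - k'),
      show ((b:ℤ) - k') = ((b - k' : ℕ) : ℤ) by push_cast; omega, cbinomZ_natCast, add_comm w z]
  · rw [cbinomZ_neg (by omega)]
    apply Finset.sum_eq_zero
    intro l hl
    simp only [Finset.mem_range] at hl
    rw [cbinomZ_neg (show (l:ℤ) - k' < 0 by omega), mul_zero]

lemma convB (z w : ℂ) (b : ℕ) (k : ℤ) (hk : -1 ≤ k) :
    ∑ l ∈ Finset.range (b+1), ((l:ℂ) - (k:ℂ)) * (cbinomZ z ((b:ℤ) - l) * cbinomZ w ((l:ℤ) - k))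
      = w * cbinomZ (z + w - 1) ((b:ℤ) - k - 1) := by
  have step : ∀ l : ℕ, ((l:ℂ) - (k:ℂ)) * (cbinomZ z ((b:ℤ) - l) * cbinomZ w ((l:ℤ) - k))
      = w * (cbinomZ z ((b:ℤ) - l) * cbinomZ (w-1) ((l:ℤ) - (k+1))) := by
    intro l
    have h := absorb w ((l:ℤ) - k)
    push_cast at h
    have e : (l:ℤ) - k - 1 = (l:ℤ) - (k+1) := by ring
    rw [e] at h
    calc ((l:ℂ) - (k:ℂ)) * (cbinomZ z ((b:ℤ) - l) * cbinomZ w ((l:ℤ) - k))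
        = cbinomZ z ((b:ℤ) - l) * (((l:ℂ) - (k:ℂ)) * cbinomZ w ((l:ℤ) - k)) := by ring
      _ = cbinomZ z ((b:ℤ) - l) * (w * cbinomZ (w-1) ((l:ℤ) - (k+1))) := by rw [h]
      _ = w * (cbinomZ z ((b:ℤ) - l) * cbinomZ (w-1) ((l:ℤ) - (k+1))) := by ring
  rw [Finset.sum_congr rfl (fun l _ => step l), ← Finset.mul_sum,
    convA z (w-1) b (k+1) (by omega)]
  congr 2
  · ring
  · omega

lemma main_id (s : ℂ) (b : ℕ) (k : ℤ) (hk : -1 ≤ k) :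
    ∑ l ∈ Finset.range (b+1), ((l:ℂ)+1) *
      ((1-s) * cbinomZ s ((b:ℤ) - l) * cbinomZ (-s) ((l:ℤ) - k)
        + s * cbinomZ (s-1) ((b:ℤ) - l) * cbinomZ (1-s) ((l:ℤ) - k))
      = if k = (b:ℤ) then (b:ℂ)+1 else 0 := by
  have expand : ∀ l ∈ Finset.range (b+1), ((l:ℂ)+1) *
      ((1-s) * cbinomZ s ((b:ℤ) - l) * cbinomZ (-s) ((l:ℤ) - k)
        + s * cbinomZ (s-1) ((b:ℤ) - l) * cbinomZ (1-s) ((l:ℤ) - k))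
      = (1-s) * (((l:ℂ) - (k:ℂ)) * (cbinomZ s ((b:ℤ) - l) * cbinomZ (-s) ((l:ℤ) - k)))
        + s * (((l:ℂ) - (k:ℂ)) * (cbinomZ (s-1) ((b:ℤ) - l) * cbinomZ (1-s) ((l:ℤ) - k)))
        + ((k:ℂ)+1) * (cbinomZ s ((b:ℤ) - l) * cbinomZ (-s) ((l:ℤ) - k)) * (1-s)
        + ((k:ℂ)+1) * (cbinomZ (s-1) ((b:ℤ) - l) * cbinomZ (1-s) ((l:ℤ) - k)) * s := by
    intro l _; ring
  rw [Finset.sum_congr rfl expand]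
  simp only [Finset.sum_add_distrib]
  rw [← Finset.mul_sum, ← Finset.mul_sum, ← Finset.sum_mul, ← Finset.sum_mul,
    ← Finset.mul_sum, ← Finset.mul_sum]
  rw [convB s (-s) b k hk, convB (s-1) (1-s) b k hk]
  have e1 : s + -s - 1 = (-1 : ℂ) := by ring
  have e2 : s - 1 + (1 - s) - 1 = (-1 : ℂ) := by ring
  rw [e1, e2]
  rcases eq_or_lt_of_le hk with h | h
  · have hk0 : ((k:ℂ)+1) = 0 := by rw [← h]; norm_num
    have hkb : ¬ (k = (b:ℤ)) := by omega
    rw [hk0, if_neg hkb]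
    ring
  · have hk0 : 0 ≤ k := by omega
    rw [convA s (-s) b k hk0, convA (s-1) (1-s) b k hk0]
    have e3 : s + -s = (0:ℂ) := by ring
    have e4 : s - 1 + (1 - s) = (0:ℂ) := by ring
    rw [e3, e4, cbinomZ_zero_left]
    by_cases hkb : k = (b:ℤ)
    · rw [if_pos hkb, if_pos (by omega)]
      have : ((k:ℂ)+1) = (b:ℂ)+1 := by rw [hkb]; push_cast; ring
      rw [this]; ring
    · rw [if_neg hkb, if_neg (by omega)]
      ring

lemma EEsum_neg_b (s : ℂ) (a b : ℤ) (hb : b < 0) : EEsum s a b = 0 := by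
  unfold EEsum
  apply finsum_eq_zero_of_forall_eq_zero
  intro l
  rw [cbinomZ_neg (show b - (l:ℤ) < 0 by omega) s,
    cbinomZ_neg (show b - (l:ℤ) < 0 by omega) (s-1)]
  ring

lemma EEsum_eval (s : ℂ) (a b : ℤ) (ha : a < 0) (hb : 0 ≤ b) :
    EEsum s a b = if a + b = -2 then (b:ℂ)+1 else 0 := by
  lift b to ℕ using hb with bn
  set k : ℤ := -a - 2 with hky
  have hk : -1 ≤ k := by omega
  unfold EEsum
  rw [finsum_eq_finset_sum_of_support_subset _
    (s := Finset.range (bn+1)) (by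
      intro l hl
      simp only [Function.mem_support] at hl
      simp only [Finset.coe_range, Set.mem_Iio]
      by_contra hcon
      push_neg at hcon
      apply hl
      rw [cbinomZ_neg (show (bn:ℤ) - (l:ℤ) < 0 by omega) s,
        cbinomZ_neg (show (bn:ℤ) - (l:ℤ) < 0 by omega) (s-1)]
      ring)]
  have congr1 : ∀ l ∈ Finset.range (bn+1), ((l : ℂ) + 1) *
      ((1 - s) * cbinomZ s ((bn:ℤ) - l) * cbinomZ (-s) (a + 2 + l)
        + s * cbinomZ (s - 1) ((bn:ℤ) - l) * cbinomZ (1 - s) (a + 2 + l))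
      = ((l:ℂ)+1) *
      ((1-s) * cbinomZ s ((bn:ℤ) - l) * cbinomZ (-s) ((l:ℤ) - k)
        + s * cbinomZ (s-1) ((bn:ℤ) - l) * cbinomZ (1-s) ((l:ℤ) - k)) := by
    intro l _
    have e : a + 2 + (l:ℤ) = (l:ℤ) - k := by omega
    rw [e]
  rw [Finset.sum_congr rfl congr1, main_id s bn k hk]
  by_cases hab : a + (bn:ℤ) = -2
  · rw [if_pos (by omega), if_pos hab]
    push_cast
    ring
  · rw [if_neg (by omega), if_neg hab]

/-- identity (5.9) and its consequence.  (i) For every `s ∈ ℂ`, the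
series `((x+x₂)/(x+x₀))^s (1-s+s(x+x₀)/(x+x₂)) (x₀-x₂)^{-2} - (x₀-x₂)^{-2}` lies in
`ℂ[[x₀,x₂,x⁻¹]]`: its coefficient at `x₀^a x₂^b x^c` vanishes whenever `a < 0`, `b < 0`
or `c > 0`.  Here the coefficient of `(x₀-x₂)^{-2}` at `x₀^a x₂^b x^c` is
`b+1` if `a+b = -2`, `b ≥ 0`, `c = 0`, and `0` otherwise.
(ii) Consequently, for `α, β ∈ H`, `m ∈ ℕ` and `n ∈ ℤ₊`,
`Res_{x₀} Res_{x₂} x₀^{m} x₂^{-n} ∑_{r=1}^{p} ((x+x₂)/(x+x₀))^{r/p}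
  (1-r/p+(r/p)(x+x₀)/(x+x₂)) (x₀-x₂)^{-2} ⟨α_(r),β⟩ = m δ_{m,n} ⟨α,β⟩`,
stated as the equality of the coefficients of each power `x^c`. -/
theorem statement15 {H : Type} [AddCommGroup H] [Module ℂ H]
    (p : ℕ) (hp : 0 < p) (Hs : HeisForm p H) :
    (∀ (s : ℂ) (a b c : ℤ), (a < 0 ∨ b < 0 ∨ 0 < c) →
      EE s a b c - (if a + b = -2 ∧ 0 ≤ b ∧ c = 0 then ((b : ℂ) + 1) else 0) = 0)
    ∧ (∀ (α β : H) (m : ℕ) (n : ℤ), 1 ≤ n → ∀ c : ℤ,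
        (∑ r ∈ Finset.Icc 1 p,
            Hs.bil (Hs.proj (r : ℤ) α) β * EE ((r : ℂ) / (p : ℂ)) (-(m : ℤ) - 1) (n - 1) c)
          = if (m : ℤ) = n ∧ c = 0 then (m : ℂ) * Hs.bil α β else 0) := by
  constructor
  · intro s a b c h
    unfold EE
    by_cases hc : c = -(a + b + 2)
    · rw [if_pos hc]
      rcases lt_or_ge b 0 with hb | hb
      · rw [EEsum_neg_b s a b hb, if_neg (by omega), sub_zero]
      · have ha : a < 0 := by rcases h with h|h|h <;> omega
        rw [EEsum_eval s a b ha hb]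
        by_cases hab : a + b = -2
        · rw [if_pos hab, if_pos (by omega), sub_self]
        · rw [if_neg hab, if_neg (by omega), sub_zero]
    · rw [if_neg hc, if_neg (by omega), sub_zero]
  · intro α β m n hn c
    have hproj : ∑ r ∈ Finset.Icc 1 p, Hs.proj (r:ℤ) α = α := by
      have h0 := Hs.proj_sum α
      have hper : Hs.proj ((p:ℕ):ℤ) α = Hs.proj 0 α := by
        have := Hs.proj_per 0
        rw [zero_add] at this
        rw [this]
      rw [Finset.range_eq_Ico, Finset.sum_eq_sum_Ico_succ_bot hp] at h0
      calc ∑ r ∈ Finset.Icc 1 p, Hs.proj (r:ℤ) α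
          = ∑ r ∈ Finset.Ico 1 p, Hs.proj (r:ℤ) α + Hs.proj ((p:ℕ):ℤ) α := by
            rw [← Finset.Ico_add_one_right_eq_Icc, Finset.sum_Ico_succ_top (by omega)]
        _ = Hs.proj ((0:ℕ):ℤ) α + ∑ r ∈ Finset.Ico (0+1) p, Hs.proj (r:ℤ) α := by
            rw [hper]
            simp only [Nat.cast_zero, zero_add]
            abel
        _ = α := h0
    have hbil : ∑ r ∈ Finset.Icc 1 p, Hs.bil (Hs.proj (r:ℤ) α) β = Hs.bil α β := by
      conv_rhs => rw [← hproj]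
      rw [map_sum, LinearMap.sum_apply]
    unfold EE
    by_cases hc : c = (m:ℤ) - n
    · have hcr : c = -((-(m:ℤ) - 1) + (n - 1) + 2) := by omega
      have heach : ∀ r ∈ Finset.Icc 1 p,
          Hs.bil (Hs.proj (r:ℤ) α) β *
            (if c = -((-(m:ℤ) - 1) + (n - 1) + 2) then EEsum ((r:ℂ)/(p:ℂ)) (-(m:ℤ)-1) (n-1) else 0)
          = Hs.bil (Hs.proj (r:ℤ) α) β *
            (if (m:ℤ) = n then ((n:ℤ):ℂ) else 0) := by
        intro r _
        rw [if_pos hcr, EEsum_eval _ _ _ (by omega) (by omega)]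
        congr 1
        by_cases hmn : (m:ℤ) = n
        · rw [if_pos (by omega), if_pos hmn]
          push_cast
          ring
        · rw [if_neg (by omega), if_neg hmn]
      rw [Finset.sum_congr rfl heach, ← Finset.sum_mul, hbil]
      by_cases hmn : (m:ℤ) = n
      · rw [if_pos hmn, if_pos ⟨hmn, by omega⟩]
        have : ((n:ℤ):ℂ) = (m:ℂ) := by rw [← hmn]; push_cast; ring
        rw [this]
        ring
      · rw [if_neg hmn, if_neg (by tauto)]
        ring
    · have heach : ∀ r ∈ Finset.Icc 1 p,
          Hs.bil (Hs.proj (r:ℤ) α) β *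
            (if c = -((-(m:ℤ) - 1) + (n - 1) + 2) then EEsum ((r:ℂ)/(p:ℂ)) (-(m:ℤ)-1) (n-1) else 0)
          = 0 := by
        intro r _
        rw [if_neg (by omega), mul_zero]
      rw [Finset.sum_congr rfl heach, Finset.sum_const, smul_zero]
      rw [if_neg (by rintro ⟨h1, h2⟩; omega)]
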